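/- Let B, B' : Fin m → Fin m → ℝ be antisymmetric, each simple (B i j = u i * v j − v i * u j and B' i j = u' i * v' j − v' i * u' j for some vectors u,v,u',v'), and suppose the full antisymmetrization over all four indices of (i,j,k,l) ↦ B i j * B' k l vanishes for all i,j,k,l. For any a, b, c : Fin m → ℝ define the vector w by w i = Σ_{j,k,l} Alt₃ʲᵏˡ((j,k,l) ↦ B i j * B' k l)(j,k,l) * a j * b k * c l. Then for all i, j, k, the full antisymmetrization over (i,j,k) of B i j * w k vanishes (w is a common factor direction: B_{[ij}w_{k]} = 0). -/

import Mathlib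

open Finset

/-- Full antisymmetrization of a 4-index expression over all four index slots. -/
noncomputable def alt4 {m : ℕ} (T : Fin m → Fin m → Fin m → Fin m → ℝ)
    (i j k l : Fin m) : ℝ :=
  (1 / 24 : ℝ) * ∑ σ : Equiv.Perm (Fin 4),
    ((Equiv.Perm.sign σ : ℤ) : ℝ) *
      T (![i, j, k, l] (σ 0)) (![i, j, k, l] (σ 1)) (![i, j, k, l] (σ 2)) (![i, j, k, l] (σ 3))

/-- Antisymmetrization of a 3-index expression over its three index slots. -/
noncomputable def alt3 {m : ℕ} (T : Fin m → Fin m → Fin m → ℝ)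
    (i j k : Fin m) : ℝ :=
  (1 / 6 : ℝ) * ∑ σ : Equiv.Perm (Fin 3),
    ((Equiv.Perm.sign σ : ℤ) : ℝ) *
      T (![i, j, k] (σ 0)) (![i, j, k] (σ 1)) (![i, j, k] (σ 2))

/-!
Since `B = u ∧ v` is simple, contracting `B_{i[j}B'_{kl]}` with `a, b, c` leaves the free index
on `u` or `v`, so `w` lies in the plane `span {u, v}` of `B`. Then `B_{[ij}w_{k]}` is a multiple
of `u ∧ v ∧ w = 0`.
-/

lemma Equiv.Perm.univ_fin_three : (univ : Finset (Equiv.Perm (Fin 3))) =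
    {1, swap 0 1, swap 0 2, swap 1 2, swap 0 1 * swap 1 2, swap 0 2 * swap 1 2} := by
  decide

section Simple

variable {m : ℕ}

lemma alt3_eq (T : Fin m → Fin m → Fin m → ℝ) (i j k : Fin m) :
    alt3 T i j k = (T i j k - T j i k - T k j i - T i k j + T j k i + T k i j) / 6 := by
  rw [alt3, Equiv.Perm.univ_fin_three]
  simp +decide [sum_insert, Equiv.swap_apply_def]
  ring

variable {B : Fin m → Fin m → ℝ} {u v : Fin m → ℝ}

lemma alt3_simple_mul_eq_sub (hB : ∀ i j, B i j = u i * v j - v i * u j)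
    (C : Fin m → Fin m → ℝ) (i j k l : Fin m) :
    alt3 (fun j k l => B i j * C k l) j k l =
      u i * alt3 (fun j k l => v j * C k l) j k l - v i * alt3 (fun j k l => u j * C k l) j k l := by
  simp only [alt3_eq, hB]
  ring

lemma contract_alt3_simple_mul_mem_span (hB : ∀ i j, B i j = u i * v j - v i * u j)
    (C : Fin m → Fin m → ℝ) (a b c : Fin m → ℝ) :
    (fun i => ∑ j, ∑ k, ∑ l, alt3 (fun j k l => B i j * C k l) j k l * a j * b k * c l) ∈
      Submodule.span ℝ {u, v} := by
  refine Submodule.mem_span_pair.mpr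
    ⟨∑ j, ∑ k, ∑ l, alt3 (fun j k l => v j * C k l) j k l * a j * b k * c l,
     -∑ j, ∑ k, ∑ l, alt3 (fun j k l => u j * C k l) j k l * a j * b k * c l, ?_⟩
  ext i
  simp only [alt3_simple_mul_eq_sub hB, Pi.add_apply, Pi.smul_apply, smul_eq_mul, sub_mul,
    mul_assoc, sum_sub_distrib, ← mul_sum]
  ring

lemma alt3_mul_eq_zero_of_mem_span (hB : ∀ i j, B i j = u i * v j - v i * u j) {w : Fin m → ℝ}
    (hw : w ∈ Submodule.span ℝ {u, v}) (i j k : Fin m) :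
    alt3 (fun i j k => B i j * w k) i j k = 0 := by
  obtain ⟨p, q, rfl⟩ := Submodule.mem_span_pair.mp hw
  simp only [alt3_eq, hB, Pi.add_apply, Pi.smul_apply, smul_eq_mul]
  ring

end Simple

theorem common_factor_direction (m : ℕ) (B B' : Fin m → Fin m → ℝ)
    (hBs : ∃ u v : Fin m → ℝ, ∀ i j, B i j = u i * v j - v i * u j)
    (a b c : Fin m → ℝ) (w : Fin m → ℝ)
    (hw : ∀ i, w i =
      ∑ j, ∑ k, ∑ l, alt3 (fun j k l => B i j * B' k l) j k l * a j * b k * c l) :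
    ∀ i j k, alt3 (fun i j k => B i j * w k) i j k = 0 := by
  obtain ⟨u, v, hB⟩ := hBs
  have hw_span : w ∈ Submodule.span ℝ {u, v} := by
    rw [funext hw]
    exact contract_alt3_simple_mul_mem_span hB B' a b c
  exact alt3_mul_eq_zero_of_mem_span hB hw_span
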